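/- There exist a constant C > 0 and an integer N₀ such that for every integer N ≥ N₀ and all real numbers α, β, γ with 0 ≤ α ≤ 1/2, 1/2 ≤ β ≤ 20, and 1/2 ≤ γ ≤ 3/2, one has −∂L_N/∂α (α, β, γ) ≥ 1/(8N²) − C/N³ and −∂L_N/∂β (α, β, γ) ≤ 3·√e/(4N²) + C/N³, where e is Euler's number. -/

import Mathlib

/-!
With `M = 2N − 1` one has `L_N = ℓ(s)` for `ℓ(u) = γ²(u² + M)/(u + M)² − 2γu/(u + M) + 1`, whose
slope `−ℓ'(u) = 2γM(u + M − γ(u − 1))/(u + M)³` is of order `1/M` for `u` near `1`. By the chain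
rule `−∂L/∂α = −ℓ'(s) · sβe^α(M − 1)/G²` and `−∂L/∂β = −ℓ'(s) · se^α/G`, where `G ∈ [M, M + 1]`.
In the given regime the exponent defining `s` is at most `40/M`, so `0 ≤ M(s − 1) ≤ 80`, and
`1 ≤ e^α ≤ √e`. Bounding the factors with `2γ ≥ 1`, `β ≥ 1/2`, `se^α ≥ 1` from below and with
`2γ ≤ 3`, `se^α ≤ √e + O(1/N)` from above gives both estimates.
-/

noncomputable section

/-- `s = exp(β·e^α / (e^α + 2N − 2))`. -/
def sFun (N : ℕ) (α β : ℝ) : ℝ :=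
  Real.exp (β * Real.exp α / (Real.exp α + 2 * (N : ℝ) - 2))

/-- `r = s + 2N − 1`. -/
def rFun (N : ℕ) (α β : ℝ) : ℝ := sFun N α β + 2 * (N : ℝ) - 1

/-- The loss `L_N(α, β, γ) = γ²·(s² + 2N − 1)/r² − 2γ·s/r + 1`. -/
def Lfun (N : ℕ) (α β γ : ℝ) : ℝ :=
  γ ^ 2 * ((sFun N α β) ^ 2 + (2 * (N : ℝ) - 1)) / (rFun N α β) ^ 2 -
    2 * γ * sFun N α β / rFun N α β + 1

/-- The partial derivative `∂L_N/∂α`. -/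
def dLalpha (N : ℕ) (α β γ : ℝ) : ℝ := deriv (fun x => Lfun N x β γ) α

/-- The partial derivative `∂L_N/∂β`. -/
def dLbeta (N : ℕ) (α β γ : ℝ) : ℝ := deriv (fun x => Lfun N α x γ) β

/-- The partial derivative `∂L_N/∂γ`. -/
def dLgamma (N : ℕ) (α β γ : ℝ) : ℝ := deriv (fun x => Lfun N α β x) γ

open Real

def outerLoss (γ M u : ℝ) : ℝ := γ ^ 2 * (u ^ 2 + M) / (u + M) ^ 2 - 2 * γ * u / (u + M) + 1

def outerLossSlope (γ M u : ℝ) : ℝ := 2 * γ * M * (u + M - γ * (u - 1)) / (u + M) ^ 3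

theorem Lfun_eq_outerLoss (N : ℕ) (α β γ : ℝ) :
    Lfun N α β γ = outerLoss γ (2 * N - 1) (sFun N α β) := by
  simp only [Lfun, outerLoss, rFun]
  ring

theorem hasDerivAt_outerLoss {γ M u : ℝ} (h : u + M ≠ 0) :
    HasDerivAt (outerLoss γ M) (-outerLossSlope γ M u) u := by
  have hlin : HasDerivAt (fun v : ℝ => v + M) 1 u := (hasDerivAt_id u).add_const M
  have hnum : HasDerivAt (fun v : ℝ => γ ^ 2 * (v ^ 2 + M)) (γ ^ 2 * (2 * u)) u := by
    simpa using ((hasDerivAt_pow 2 u).add_const M).const_mul (γ ^ 2)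
  have hcross : HasDerivAt (fun v : ℝ => 2 * γ * v) (2 * γ) u := by
    simpa using (hasDerivAt_id u).const_mul (2 * γ)
  refine (((hnum.div (hlin.pow 2) (pow_ne_zero 2 h)).sub
    (hcross.div hlin h)).add_const 1).congr_deriv ?_
  simp only [outerLossSlope, Pi.pow_apply]
  field_simp
  ring

theorem hasDerivAt_sFun_alpha (N : ℕ) (α β : ℝ) (hG : exp α + 2 * N - 2 ≠ 0) :
    HasDerivAt (fun x => sFun N x β)
      (sFun N α β * (β * exp α * (2 * N - 2) / (exp α + 2 * N - 2) ^ 2)) α := by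
  have he := hasDerivAt_exp α
  refine (((he.const_mul β).div ((he.add_const _).sub_const 2) hG).exp).congr_deriv ?_
  simp only [sFun, Pi.div_apply]
  ring

theorem hasDerivAt_sFun_beta (N : ℕ) (α β : ℝ) :
    HasDerivAt (fun x => sFun N α x) (sFun N α β * (exp α / (exp α + 2 * N - 2))) β := by
  unfold sFun
  simpa using (((hasDerivAt_id β).mul_const (exp α)).div_const (exp α + 2 * N - 2)).exp

theorem neg_dLalpha_eq {N : ℕ} (hN : 1 ≤ N) (α β γ : ℝ) :
    -dLalpha N α β γ = outerLossSlope γ (2 * N - 1) (sFun N α β) *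
      (sFun N α β * (β * exp α * (2 * N - 2) / (exp α + 2 * N - 2) ^ 2)) := by
  have hn : (1 : ℝ) ≤ N := by exact_mod_cast hN
  have hs : 0 < sFun N α β := exp_pos _
  have hG : exp α + 2 * N - 2 ≠ 0 := by linarith [exp_pos α]
  have hL : (fun x => Lfun N x β γ) = outerLoss γ (2 * N - 1) ∘ fun x => sFun N x β := by
    funext x; exact Lfun_eq_outerLoss N x β γ
  rw [dLalpha, hL, ((hasDerivAt_outerLoss (by linarith)).comp α
    (hasDerivAt_sFun_alpha N α β hG)).deriv]
  ring

theorem neg_dLbeta_eq {N : ℕ} (hN : 1 ≤ N) (α β γ : ℝ) :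
    -dLbeta N α β γ = outerLossSlope γ (2 * N - 1) (sFun N α β) *
      (sFun N α β * (exp α / (exp α + 2 * N - 2))) := by
  have hn : (1 : ℝ) ≤ N := by exact_mod_cast hN
  have hs : 0 < sFun N α β := exp_pos _
  have hL : (fun x => Lfun N α x γ) = outerLoss γ (2 * N - 1) ∘ fun x => sFun N α x := by
    funext x; exact Lfun_eq_outerLoss N α x γ
  rw [dLbeta, hL, ((hasDerivAt_outerLoss (by linarith)).comp β
    (hasDerivAt_sFun_beta N α β)).deriv]
  ring

theorem le_outerLossSlope {γ M u K : ℝ} (hM : 0 < M) (hγ₀ : 1 / 2 ≤ γ) (hγ₁ : γ ≤ 3 / 2)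
    (hu₀ : 1 ≤ u) (hu₁ : u ≤ 3) (hK : u + M ≤ K) : M ^ 2 / K ^ 3 ≤ outerLossSlope γ M u := by
  have hX : M ≤ u + M - γ * (u - 1) := by nlinarith
  have hMX := mul_le_mul_of_nonneg_left hX hM.le
  have hnum : M ^ 2 ≤ 2 * γ * M * (u + M - γ * (u - 1)) := by nlinarith
  exact div_le_div₀ (by nlinarith) hnum (by positivity) (by gcongr)

theorem outerLossSlope_le {γ M u K : ℝ} (hM : 0 ≤ M) (hγ₀ : 0 ≤ γ) (hγ₁ : γ ≤ 3 / 2)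
    (hu : 1 ≤ u) (hK₀ : 0 < K) (hK : K ≤ u + M) : outerLossSlope γ M u ≤ 3 * M / K ^ 2 := by
  have hpos : 0 < u + M := by linarith
  have hnum : 2 * γ * M * (u + M - γ * (u - 1)) ≤ 3 * M * (u + M) := by
    have : 2 * γ * (u + M - γ * (u - 1)) ≤ 3 * (u + M) := by
      nlinarith [mul_nonneg hγ₀ (sub_nonneg.2 hu)]
    nlinarith
  calc outerLossSlope γ M u ≤ 3 * M * (u + M) / (u + M) ^ 3 := by
        unfold outerLossSlope; gcongr
    _ = 3 * M / (u + M) ^ 2 := by field_simp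
    _ ≤ 3 * M / K ^ 2 := by gcongr

theorem one_le_sFun {N : ℕ} (hN : 1 ≤ N) (α : ℝ) {β : ℝ} (hβ : 0 ≤ β) : 1 ≤ sFun N α β := by
  have hn : (1 : ℝ) ≤ N := by exact_mod_cast hN
  exact one_le_exp (div_nonneg (mul_nonneg hβ (exp_pos α).le) (by linarith [exp_pos α]))

theorem mul_sFun_sub_one_le {N : ℕ} (hN : 1 ≤ N) {α β : ℝ} (hα : 0 ≤ α) (hβ : 0 ≤ β)
    (h : β * exp α ≤ 2 * N - 1) : (2 * N - 1) * (sFun N α β - 1) ≤ 2 * (β * exp α) := by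
  have hn : (1 : ℝ) ≤ N := by exact_mod_cast hN
  set t := β * exp α / (exp α + 2 * N - 2)
  have hG : 2 * N - 1 ≤ exp α + 2 * N - 2 := by linarith [one_le_exp hα]
  have ht₀ : 0 ≤ t := div_nonneg (by positivity) (by linarith)
  have hMt : (2 * N - 1) * t ≤ β * exp α :=
    calc (2 * N - 1) * t ≤ (exp α + 2 * N - 2) * t := mul_le_mul_of_nonneg_right hG ht₀
      _ = β * exp α := mul_div_cancel₀ _ (by linarith)
  have ht₁ : |t| ≤ 1 := by rw [abs_of_nonneg ht₀]; nlinarith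
  have hs : sFun N α β - 1 ≤ 2 * t := by
    change exp t - 1 ≤ 2 * t
    simpa only [abs_of_nonneg ht₀] using (le_abs_self _).trans (abs_exp_sub_one_le ht₁)
  nlinarith

theorem sqrt_exp_one_lt_two : √(exp 1) < 2 := by
  rw [← exp_half]
  calc exp (1 / 2) < exp (log 2) := exp_lt_exp.2 (by linarith [log_two_gt_d9])
    _ = 2 := exp_log two_pos

theorem exp_le_sqrt_exp_one {α : ℝ} (hα : α ≤ 1 / 2) : exp α ≤ √(exp 1) :=
  exp_half 1 ▸ exp_le_exp.2 (by linarith)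

theorem mul_sFun_sub_one_le_eighty {N : ℕ} (hN : 21 ≤ N) {α β : ℝ} (hα₀ : 0 ≤ α)
    (hα₁ : α ≤ 1 / 2) (hβ₀ : 0 ≤ β) (hβ₁ : β ≤ 20) : (2 * N - 1) * (sFun N α β - 1) ≤ 80 := by
  have hn : (21 : ℝ) ≤ N := by exact_mod_cast hN
  have ha : exp α ≤ 2 := (exp_le_sqrt_exp_one hα₁).trans sqrt_exp_one_lt_two.le
  have hβa : β * exp α ≤ 40 := by nlinarith [exp_pos α]
  linarith [mul_sFun_sub_one_le (N := N) (by omega) hα₀ hβ₀ (by linarith)]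

theorem inv_eight_sq_sub_inv_cube_le {n : ℝ} (hn : 0 < n) :
    1 / (8 * n ^ 2) - 1 / n ^ 3 ≤
      (2 * n - 1) ^ 2 / (2 * n + 2) ^ 3 * ((2 * n - 2) / (2 * (2 * n) ^ 2)) := by
  have key : (2 * n - 1) ^ 2 / (2 * n + 2) ^ 3 * ((2 * n - 2) / (2 * (2 * n) ^ 2)) -
      (1 / (8 * n ^ 2) - 1 / n ^ 3) =
      (12 * n ^ 3 + 89 * n ^ 2 + 91 * n + 32) / (32 * n ^ 3 * (n + 1) ^ 3) := by
    field_simp; ring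
  exact sub_nonneg.1 (key ▸ by positivity)

theorem neg_dLalpha_ge {N : ℕ} (hN : 21 ≤ N) {α β γ : ℝ} (hα₀ : 0 ≤ α) (hα₁ : α ≤ 1 / 2)
    (hβ₀ : 1 / 2 ≤ β) (hβ₁ : β ≤ 20) (hγ₀ : 1 / 2 ≤ γ) (hγ₁ : γ ≤ 3 / 2) :
    1 / (8 * (N : ℝ) ^ 2) - 1 / (N : ℝ) ^ 3 ≤ -dLalpha N α β γ := by
  have hn : (21 : ℝ) ≤ N := by exact_mod_cast hN
  have hs₁ := one_le_sFun (N := N) (by omega) α (by linarith : 0 ≤ β)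
  have hs₃ : sFun N α β ≤ 3 := by
    nlinarith [mul_sFun_sub_one_le_eighty hN hα₀ hα₁ (by linarith) hβ₁]
  have ha₁ : 1 ≤ exp α := one_le_exp hα₀
  have ha₂ : exp α ≤ 2 := (exp_le_sqrt_exp_one hα₁).trans sqrt_exp_one_lt_two.le
  have hsa : 1 ≤ sFun N α β * exp α := by nlinarith
  have hslope := le_outerLossSlope (M := 2 * N - 1) (K := 2 * N + 2) (by linarith) hγ₀ hγ₁
    hs₁ hs₃ (by linarith)
  have hG₀ : 0 < exp α + 2 * N - 2 := by linarith
  have hrate : (2 * (N : ℝ) - 2) / (2 * (2 * N) ^ 2) ≤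
      sFun N α β * (β * exp α * (2 * N - 2) / (exp α + 2 * N - 2) ^ 2) :=
    calc (2 * (N : ℝ) - 2) / (2 * (2 * N) ^ 2) = 1 / 2 * ((2 * N - 2) / (2 * N) ^ 2) := by ring
      _ ≤ (sFun N α β * exp α) * β * ((2 * N - 2) / (exp α + 2 * N - 2) ^ 2) :=
        mul_le_mul (by nlinarith) (div_le_div_of_nonneg_left (by linarith) (by positivity)
          (pow_le_pow_left₀ hG₀.le (by linarith) 2)) (div_nonneg (by linarith) (by positivity))
          (by nlinarith)
      _ = _ := by ring
  calc 1 / (8 * (N : ℝ) ^ 2) - 1 / (N : ℝ) ^ 3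
      ≤ (2 * N - 1) ^ 2 / (2 * N + 2) ^ 3 * ((2 * N - 2) / (2 * (2 * N) ^ 2)) :=
        inv_eight_sq_sub_inv_cube_le (by linarith)
    _ ≤ _ := mul_le_mul hslope hrate (div_nonneg (by linarith) (by positivity))
        ((div_nonneg (sq_nonneg _) (by positivity)).trans hslope)
    _ = -dLalpha N α β γ := (neg_dLalpha_eq (by omega) α β γ).symm

theorem neg_dLbeta_le {N : ℕ} (hN : 21 ≤ N) {α β γ : ℝ} (hα₀ : 0 ≤ α) (hα₁ : α ≤ 1 / 2)
    (hβ₀ : 0 ≤ β) (hβ₁ : β ≤ 20) (hγ₀ : 0 ≤ γ) (hγ₁ : γ ≤ 3 / 2) :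
    -dLbeta N α β γ ≤ 3 * √(exp 1) / (4 * (N : ℝ) ^ 2) + 120 / (N : ℝ) ^ 3 := by
  have hn : (21 : ℝ) ≤ N := by exact_mod_cast hN
  have hs₁ := one_le_sFun (N := N) (by omega) α hβ₀
  have hs₈₀ := mul_sFun_sub_one_le_eighty hN hα₀ hα₁ hβ₀ hβ₁
  have ha₁ : 1 ≤ exp α := one_le_exp hα₀
  have ha₂ := exp_le_sqrt_exp_one hα₁
  have hsa : sFun N α β * exp α ≤ √(exp 1) + 160 / N := by
    have hs : sFun N α β - 1 ≤ 80 / N := by rw [le_div_iff₀ (by linarith)]; nlinarith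
    have : exp α * (sFun N α β - 1) ≤ 160 / N :=
      calc exp α * (sFun N α β - 1) ≤ 2 * (80 / N) :=
            mul_le_mul (by linarith [sqrt_exp_one_lt_two]) hs (by linarith) (by norm_num)
        _ = 160 / N := by ring
    linarith [show sFun N α β * exp α = exp α + exp α * (sFun N α β - 1) by ring]
  have hM : (0 : ℝ) < 2 * N - 1 := by linarith
  calc -dLbeta N α β γ
      = outerLossSlope γ (2 * N - 1) (sFun N α β) *
          (sFun N α β * (exp α / (exp α + 2 * N - 2))) := neg_dLbeta_eq (by omega) α β γ
    _ ≤ 3 * (2 * N - 1) / (2 * N) ^ 2 * (sFun N α β * (exp α / (2 * N - 1))) := by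
        refine mul_le_mul (outerLossSlope_le (K := 2 * N) hM.le hγ₀ hγ₁ hs₁ (by linarith)
          (by linarith)) ?_ (mul_nonneg (by linarith) (div_nonneg (by positivity) (by linarith)))
          (div_nonneg (by linarith) (by positivity))
        exact mul_le_mul_of_nonneg_left
          (div_le_div_of_nonneg_left (by positivity) hM (by linarith)) (by positivity)
    _ = 3 * (sFun N α β * exp α) / (4 * N ^ 2) := by field_simp; ring
    _ ≤ 3 * (√(exp 1) + 160 / N) / (4 * N ^ 2) := by gcongr
    _ = 3 * √(exp 1) / (4 * (N : ℝ) ^ 2) + 120 / (N : ℝ) ^ 3 := by field_simp; ring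

/-- For all sufficiently large `N`, in the regime `0 ≤ α ≤ 1/2`, `1/2 ≤ β ≤ 20`,
`1/2 ≤ γ ≤ 3/2`, one has `−∂L_N/∂α ≥ 1/(8N²) − C/N³` and
`−∂L_N/∂β ≤ 3·√e/(4N²) + C/N³`. -/
theorem stmt17 :
    ∃ C : ℝ, 0 < C ∧ ∃ N₀ : ℕ, ∀ N : ℕ, N₀ ≤ N → ∀ α β γ : ℝ,
      0 ≤ α → α ≤ 1 / 2 → 1 / 2 ≤ β → β ≤ 20 → 1 / 2 ≤ γ → γ ≤ 3 / 2 →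
        1 / (8 * (N : ℝ) ^ 2) - C / (N : ℝ) ^ 3 ≤ -dLalpha N α β γ ∧
          -dLbeta N α β γ ≤
            3 * Real.sqrt (Real.exp 1) / (4 * (N : ℝ) ^ 2) + C / (N : ℝ) ^ 3 := by
  refine ⟨120, by norm_num, 21, fun N hN α β γ hα₀ hα₁ hβ₀ hβ₁ hγ₀ hγ₁ => ⟨?_, ?_⟩⟩
  · have hn : (0 : ℝ) < N := by exact_mod_cast (by omega : 0 < N)
    calc 1 / (8 * (N : ℝ) ^ 2) - 120 / (N : ℝ) ^ 3
        ≤ 1 / (8 * (N : ℝ) ^ 2) - 1 / (N : ℝ) ^ 3 := by gcongr; norm_num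
      _ ≤ -dLalpha N α β γ := neg_dLalpha_ge hN hα₀ hα₁ hβ₀ hβ₁ hγ₀ hγ₁
  · exact neg_dLbeta_le hN hα₀ hα₁ (by linarith) hβ₁ (by linarith) hγ₁
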